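/- The eight-dimensional real vector space with basis {J, B_1, B_2, H, P_1, P_2, M, S} and brackets [J,B_a] = ε_{am}B_m, [J,P_a] = ε_{am}P_m, [B_a,H] = −ε_{am}P_m, [B_a,B_b] = ε_{ab}S, [B_a,P_b] = ε_{ab}M, with M and S central and all other brackets zero (the extended Bargmann algebra), is a Lie algebra; for all real parameters μ, χ, χ_H, μ_S, μ_{MS} the symmetric bilinear form determined by B(H,J) = −μ, B(J,J) = −χ, B(H,H) = χ_H, B(P_a,B_b) = μ_{MS}δ_{ab}, B(B_a,B_b) = μ_Sδ_{ab}, B(J,M) = μ_{MS}, B(J,S) = μ_S, B(H,S) = μ_{MS}, with all other basis pairings zero, is invariant; and this form is nondegenerate if and only if μ_{MS} ≠ 0. -/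

import Mathlib

/-!
The Jacobi identity and invariance are trilinear, so they reduce to a finite table of brackets
and pairings of the basis `J, B₀, B₁, H, P₀, P₁, M, S`. For nondegeneracy: `M` pairs to zero
with every basis vector other than `J`, and `Bil J M = μ_{MS}`, so `M` lies in the radical when
`μ_{MS} = 0`; for `μ_{MS} ≠ 0` the Gram matrix is triangular with diagonal entries `μ_{MS}` when
the rows are ordered `(M, S, H, J)` against the columns `(J, H, S, M)`, and `(P_a, B_a)` against
`(B_a, P_a)`.
-/

/-- The two-dimensional antisymmetric symbol, `ε 0 1 = 1 = −ε 1 0`. -/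
def eps : Fin 2 → Fin 2 → ℝ := ![![0, 1], ![-1, 0]]

@[simp] theorem eps_zero_zero : eps 0 0 = 0 := rfl
@[simp] theorem eps_zero_one : eps 0 1 = 1 := rfl
@[simp] theorem eps_one_zero : eps 1 0 = -1 := rfl
@[simp] theorem eps_one_one : eps 1 1 = 0 := rfl

section SpanningFamily

variable {R M N ι : Type*} [Semiring R] [AddCommMonoid M] [Module R M] [AddCommMonoid N]
  [Module R N] {v : ι → M}

theorem IsLinearMap.eq_zero_of_span_eq_top (hv : Submodule.span R (Set.range v) = ⊤) {f : M → N}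
    (hf : IsLinearMap R f) (h : ∀ i, f (v i) = 0) (x : M) : f x = 0 :=
  LinearMap.congr_fun (LinearMap.ext_on_range hv (f := hf.mk' f) (g := 0) h) x

theorem eq_zero_of_span_eq_top_of_isLinearMap₃ (hv : Submodule.span R (Set.range v) = ⊤)
    {F : M → M → M → N} (h₁ : ∀ y z, IsLinearMap R (F · y z))
    (h₂ : ∀ x z, IsLinearMap R (F x · z)) (h₃ : ∀ x y, IsLinearMap R (F x y))
    (h : ∀ i j k, F (v i) (v j) (v k) = 0) (x y z : M) : F x y z = 0 :=
  (h₁ y z).eq_zero_of_span_eq_top hv (fun i => (h₂ _ z).eq_zero_of_span_eq_top hv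
    (fun j => (h₃ _ _).eq_zero_of_span_eq_top hv (h i j) z) y) x

end SpanningFamily

section ExtendedBargmann

variable {V : Type*} [AddCommGroup V] [Module ℝ V]

def extendedBargmannBasis (J H M S : V) (B P : Fin 2 → V) : Fin 8 → V :=
  ![J, B 0, B 1, H, P 0, P 1, M, S]

structure IsExtendedBargmannBracket (br : V →ₗ[ℝ] V →ₗ[ℝ] V) (J H M S : V) (B P : Fin 2 → V) :
    Prop where
  anti : ∀ x y, br x y = - br y x
  J_B : ∀ a, br J (B a) = ∑ m, eps a m • B m
  J_P : ∀ a, br J (P a) = ∑ m, eps a m • P m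
  B_H : ∀ a, br (B a) H = ∑ m, (-(eps a m)) • P m
  B_B : ∀ a b, br (B a) (B b) = eps a b • S
  B_P : ∀ a b, br (B a) (P b) = eps a b • M
  M_left : ∀ x, br M x = 0
  S_left : ∀ x, br S x = 0
  J_H : br J H = 0
  H_P : ∀ a, br H (P a) = 0
  P_P : ∀ a b, br (P a) (P b) = 0

namespace IsExtendedBargmannBracket

variable {br : V →ₗ[ℝ] V →ₗ[ℝ] V} {J H M S : V} {B P : Fin 2 → V}
  (h : IsExtendedBargmannBracket br J H M S B P)
include h

theorem self (x : V) : br x x = 0 := by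
  have := h.anti x x
  rw [eq_neg_iff_add_eq_zero, ← two_smul ℝ, smul_eq_zero] at this
  exact this.resolve_left two_ne_zero

theorem M_right (x : V) : br x M = 0 := by rw [h.anti, h.M_left, neg_zero]

theorem S_right (x : V) : br x S = 0 := by rw [h.anti, h.S_left, neg_zero]

theorem H_J : br H J = 0 := by rw [h.anti, h.J_H, neg_zero]

theorem P_H (a : Fin 2) : br (P a) H = 0 := by rw [h.anti, h.H_P, neg_zero]

theorem B_J (a : Fin 2) : br (B a) J = ∑ m, (-(eps a m)) • B m := by
  simp [h.anti (B a), h.J_B]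

theorem P_J (a : Fin 2) : br (P a) J = ∑ m, (-(eps a m)) • P m := by
  simp [h.anti (P a), h.J_P]

theorem H_B (a : Fin 2) : br H (B a) = ∑ m, eps a m • P m := by
  simp [h.anti H, h.B_H]

theorem P_B (a b : Fin 2) : br (P a) (B b) = (-(eps b a)) • M := by
  rw [h.anti, h.B_P, neg_smul]

theorem jacobi_basis : let v := extendedBargmannBasis J H M S B P
    ∀ i j k,
      br (v i) (br (v j) (v k)) + br (v j) (br (v k) (v i)) + br (v k) (br (v i) (v j)) = 0 := by
  simp [extendedBargmannBasis, Fin.forall_fin_succ, Fin.sum_univ_two, h.self, h.M_left,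
    h.S_left, h.M_right, h.S_right, h.J_B, h.J_P, h.B_H, h.B_B, h.B_P, h.J_H, h.H_P, h.P_P, h.H_J,
    h.P_H, h.B_J, h.P_J, h.H_B, h.P_B]

theorem jacobi (hv : Submodule.span ℝ (Set.range (extendedBargmannBasis J H M S B P)) = ⊤)
    (x y z : V) :
    br x (br y z) + br y (br z x) + br z (br x y) = 0 :=
  eq_zero_of_span_eq_top_of_isLinearMap₃ hv
    (F := fun x y z => br x (br y z) + br y (br z x) + br z (br x y))
    (fun _ _ => ⟨fun _ _ => by simp only [map_add, LinearMap.add_apply]; abel,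
      fun _ _ => by simp only [map_smul, LinearMap.smul_apply, smul_add]⟩)
    (fun _ _ => ⟨fun _ _ => by simp only [map_add, LinearMap.add_apply]; abel,
      fun _ _ => by simp only [map_smul, LinearMap.smul_apply, smul_add]⟩)
    (fun _ _ => ⟨fun _ _ => by simp only [map_add, LinearMap.add_apply]; abel,
      fun _ _ => by simp only [map_smul, LinearMap.smul_apply, smul_add]⟩)
    h.jacobi_basis x y z

end IsExtendedBargmannBracket

structure IsExtendedBargmannForm (Bil : V →ₗ[ℝ] V →ₗ[ℝ] ℝ) (μ χ χH μS μMS : ℝ) (J H M S : V)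
    (B P : Fin 2 → V) : Prop where
  symm : ∀ x y, Bil x y = Bil y x
  H_J : Bil H J = -μ
  J_J : Bil J J = -χ
  H_H : Bil H H = χH
  P_B : ∀ a b, Bil (P a) (B b) = μMS * (if a = b then 1 else 0)
  B_B : ∀ a b, Bil (B a) (B b) = μS * (if a = b then 1 else 0)
  J_M : Bil J M = μMS
  J_S : Bil J S = μS
  H_S : Bil H S = μMS
  J_B : ∀ a, Bil J (B a) = 0
  J_P : ∀ a, Bil J (P a) = 0
  H_B : ∀ a, Bil H (B a) = 0
  H_P : ∀ a, Bil H (P a) = 0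
  H_M : Bil H M = 0
  P_P : ∀ a b, Bil (P a) (P b) = 0
  P_M : ∀ a, Bil (P a) M = 0
  P_S : ∀ a, Bil (P a) S = 0
  B_M : ∀ a, Bil (B a) M = 0
  B_S : ∀ a, Bil (B a) S = 0
  M_M : Bil M M = 0
  M_S : Bil M S = 0
  S_S : Bil S S = 0

namespace IsExtendedBargmannForm

variable {Bil : V →ₗ[ℝ] V →ₗ[ℝ] ℝ} {μ χ χH μS μMS : ℝ} {J H M S : V} {B P : Fin 2 → V}
  (h : IsExtendedBargmannForm Bil μ χ χH μS μMS J H M S B P)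
include h

theorem J_H : Bil J H = -μ := h.symm J H ▸ h.H_J

theorem M_J : Bil M J = μMS := h.symm M J ▸ h.J_M

theorem S_J : Bil S J = μS := h.symm S J ▸ h.J_S

theorem S_H : Bil S H = μMS := h.symm S H ▸ h.H_S

theorem M_H : Bil M H = 0 := h.symm M H ▸ h.H_M

theorem S_M : Bil S M = 0 := h.symm S M ▸ h.M_S

theorem B_P (a b : Fin 2) : Bil (B a) (P b) = μMS * (if b = a then 1 else 0) :=
  h.symm (B a) _ ▸ h.P_B b a

theorem B_J (a : Fin 2) : Bil (B a) J = 0 := h.symm (B a) J ▸ h.J_B a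

theorem P_J (a : Fin 2) : Bil (P a) J = 0 := h.symm (P a) J ▸ h.J_P a

theorem B_H (a : Fin 2) : Bil (B a) H = 0 := h.symm (B a) H ▸ h.H_B a

theorem P_H (a : Fin 2) : Bil (P a) H = 0 := h.symm (P a) H ▸ h.H_P a

theorem M_P (a : Fin 2) : Bil M (P a) = 0 := h.symm M (P a) ▸ h.P_M a

theorem S_P (a : Fin 2) : Bil S (P a) = 0 := h.symm S (P a) ▸ h.P_S a

theorem M_B (a : Fin 2) : Bil M (B a) = 0 := h.symm M (B a) ▸ h.B_M a

theorem S_B (a : Fin 2) : Bil S (B a) = 0 := h.symm S (B a) ▸ h.B_S a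

theorem invariant_basis {br : V →ₗ[ℝ] V →ₗ[ℝ] V} (hbr : IsExtendedBargmannBracket br J H M S B P) :
    let v := extendedBargmannBasis J H M S B P
    ∀ i j k, Bil (br (v k) (v i)) (v j) + Bil (v i) (br (v k) (v j)) = 0 := by
  simp [extendedBargmannBasis, Fin.forall_fin_succ, Fin.sum_univ_two, hbr.self, hbr.M_left,
    hbr.S_left, hbr.M_right, hbr.S_right, hbr.J_B, hbr.J_P, hbr.B_H, hbr.B_B, hbr.B_P, hbr.J_H,
    hbr.H_P, hbr.P_P, hbr.H_J, hbr.P_H, hbr.B_J, hbr.P_J, hbr.H_B, hbr.P_B, h.P_B, h.B_B, h.J_M,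
    h.J_S, h.H_S, h.J_B, h.J_P, h.H_B, h.H_P, h.H_M, h.P_P, h.P_M, h.P_S, h.B_M, h.B_S, h.M_M,
    h.M_S, h.S_S, h.B_P, h.M_J, h.S_J, h.S_H, h.M_H, h.S_M, h.B_J, h.P_J, h.B_H, h.P_H, h.M_P,
    h.S_P, h.M_B, h.S_B]

theorem invariant {br : V →ₗ[ℝ] V →ₗ[ℝ] V} (hbr : IsExtendedBargmannBracket br J H M S B P)
    (hv : Submodule.span ℝ (Set.range (extendedBargmannBasis J H M S B P)) = ⊤) (x y z : V) :
    Bil (br z x) y + Bil x (br z y) = 0 :=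
  eq_zero_of_span_eq_top_of_isLinearMap₃ hv (F := fun x y z => Bil (br z x) y + Bil x (br z y))
    (fun _ _ => ⟨fun _ _ => by simp only [map_add, LinearMap.add_apply]; ring,
      fun _ _ => by simp only [map_smul, LinearMap.smul_apply, smul_eq_mul]; ring⟩)
    (fun _ _ => ⟨fun _ _ => by simp only [map_add]; ring,
      fun _ _ => by simp only [map_smul, smul_eq_mul]; ring⟩)
    (fun _ _ => ⟨fun _ _ => by simp only [map_add, LinearMap.add_apply]; ring,
      fun _ _ => by simp only [map_smul, LinearMap.smul_apply, smul_eq_mul]; ring⟩)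
    (h.invariant_basis hbr) x y z

theorem apply_M_eq_zero (hv : Submodule.span ℝ (Set.range (extendedBargmannBasis J H M S B P)) = ⊤)
    (hμ : μMS = 0) : Bil M = 0 := by
  refine LinearMap.ext_on_range hv fun i => ?_
  fin_cases i <;> simp [extendedBargmannBasis, h.M_J, h.M_B, h.M_H, h.M_P, h.M_M, h.M_S, hμ]

theorem eq_zero_of_forall_eq_zero
    (hv : Submodule.span ℝ (Set.range (extendedBargmannBasis J H M S B P)) = ⊤)
    (hμ : μMS ≠ 0) {x : V} (hx : ∀ y, Bil x y = 0) : x = 0 := by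
  obtain ⟨c, rfl⟩ := (Submodule.mem_span_range_iff_exists_fun ℝ).mp (hv ▸ Submodule.mem_top : x ∈ _)
  have hJ := hx J; have hB₀ := hx (B 0); have hB₁ := hx (B 1); have hH := hx H
  have hP₀ := hx (P 0); have hP₁ := hx (P 1); have hM := hx M; have hS := hx S
  simp only [extendedBargmannBasis, Fin.sum_univ_eight] at hJ hB₀ hB₁ hH hP₀ hP₁ hM hS ⊢
  simp [h.H_J, h.J_J, h.H_H, h.P_B, h.B_B, h.J_M, h.J_S, h.H_S, h.J_B, h.J_P, h.H_B, h.H_P, h.H_M,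
    h.P_P, h.P_M, h.P_S, h.B_M, h.B_S, h.M_M, h.M_S, h.S_S, h.J_H, h.B_P, h.M_J, h.S_J, h.S_H,
    h.M_H, h.S_M, h.B_J, h.P_J, h.B_H, h.P_H, h.M_P, h.S_P, h.M_B, h.S_B, hμ]
    at hJ hB₀ hB₁ hH hP₀ hP₁ hM hS
  have c₃ : c 3 = 0 := by simpa [hM, hμ] using hS
  have c₇ : c 7 = 0 := by simpa [hM, c₃, hμ] using hH
  have c₆ : c 6 = 0 := by simpa [hM, c₃, c₇, hμ] using hJ
  have c₄ : c 4 = 0 := by simpa [hP₀, hμ] using hB₀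
  have c₅ : c 5 = 0 := by simpa [hP₁, hμ] using hB₁
  simp [hM, hP₀, hP₁, c₃, c₄, c₅, c₆, c₇]

end IsExtendedBargmannForm

end ExtendedBargmann

/-- The extended Bargmann algebra (2+1 dimensions, central charges `M`, `S`):
its bracket satisfies the Jacobi identity; the indicated symmetric bilinear form is invariant
for all parameters `μ, χ, χ_H, μ_S, μ_{MS}`; and it is nondegenerate iff `μ_{MS} ≠ 0`. -/
theorem extended_bargmann_CS
    (μ χ χH μS μMS : ℝ)
    (V : Type*) [AddCommGroup V] [Module ℝ V]
    (J H M S : V) (B P : Fin 2 → V)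
    (hindep : LinearIndependent ℝ ![J, B 0, B 1, H, P 0, P 1, M, S])
    (hspan : Submodule.span ℝ (Set.range ![J, B 0, B 1, H, P 0, P 1, M, S]) = ⊤)
    (br : V →ₗ[ℝ] V →ₗ[ℝ] V)
    (hbr_anti : ∀ x y : V, br x y = - br y x)
    (hJB : ∀ a, br J (B a) = ∑ m, eps a m • B m)
    (hJP : ∀ a, br J (P a) = ∑ m, eps a m • P m)
    (hBH : ∀ a, br (B a) H = ∑ m, (-(eps a m)) • P m)
    (hBB : ∀ a b, br (B a) (B b) = eps a b • S)
    (hBP : ∀ a b, br (B a) (P b) = eps a b • M)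
    (hMcentral : ∀ x : V, br M x = 0)
    (hScentral : ∀ x : V, br S x = 0)
    (hJH : br J H = 0)
    (hHP : ∀ a, br H (P a) = 0)
    (hPP : ∀ a b, br (P a) (P b) = 0)
    (Bil : V →ₗ[ℝ] V →ₗ[ℝ] ℝ)
    (hsymm : ∀ x y : V, Bil x y = Bil y x)
    (hHJ : Bil H J = -μ)
    (hJJ : Bil J J = -χ)
    (hHH : Bil H H = χH)
    (hPB : ∀ a b, Bil (P a) (B b) = μMS * (if a = b then 1 else 0))
    (hBBF : ∀ a b, Bil (B a) (B b) = μS * (if a = b then 1 else 0))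
    (hJM : Bil J M = μMS)
    (hJS : Bil J S = μS)
    (hHS : Bil H S = μMS)
    (hJBF : ∀ a, Bil J (B a) = 0)
    (hJPF : ∀ a, Bil J (P a) = 0)
    (hHBF : ∀ a, Bil H (B a) = 0)
    (hHPF : ∀ a, Bil H (P a) = 0)
    (hHM : Bil H M = 0)
    (hPPF : ∀ a b, Bil (P a) (P b) = 0)
    (hPM : ∀ a, Bil (P a) M = 0)
    (hPS : ∀ a, Bil (P a) S = 0)
    (hBM : ∀ a, Bil (B a) M = 0)
    (hBS : ∀ a, Bil (B a) S = 0)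
    (hMM : Bil M M = 0)
    (hMS : Bil M S = 0)
    (hSS : Bil S S = 0) :
    (∀ x y z : V, br x (br y z) + br y (br z x) + br z (br x y) = 0) ∧
    (∀ x y z : V, Bil (br z x) y + Bil x (br z y) = 0) ∧
    ((∀ x : V, (∀ y : V, Bil x y = 0) → x = 0) ↔ μMS ≠ 0) := by
  have hbr : IsExtendedBargmannBracket br J H M S B P :=
    ⟨hbr_anti, hJB, hJP, hBH, hBB, hBP, hMcentral, hScentral, hJH, hHP, hPP⟩
  have hBil : IsExtendedBargmannForm Bil μ χ χH μS μMS J H M S B P :=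
    ⟨hsymm, hHJ, hJJ, hHH, hPB, hBBF, hJM, hJS, hHS, hJBF, hJPF, hHBF, hHPF, hHM, hPPF, hPM, hPS,
      hBM, hBS, hMM, hMS, hSS⟩
  refine ⟨hbr.jacobi hspan, hBil.invariant hbr hspan, fun hnd hμ => ?_,
    fun hμ _ hx => hBil.eq_zero_of_forall_eq_zero hspan hμ hx⟩
  exact hindep.ne_zero 6 (hnd M (LinearMap.congr_fun (hBil.apply_M_eq_zero hspan hμ)))
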